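/- Fix u ∈ [0,1) and v ∈ (0,1). Define B/R as: u + (1-u)²/(2(1-v)) if u ≤ 2v-1; 2v - u if 2v-1 ≤ u ≤ v; v if u ≥ v. Then the single-field GL-S value V(B/R, u) equals v, i.e., this formula inverts the value function along its contour lines. -/
import Mathlib


/-- The value of the single-field General Lotto game with Scouts as a function of the
detection probability `u` and the resource ratio `x = B/R`. -/
noncomputable def glsValue (u x : ℝ) : ℝ :=
  if x ≤ u then x
  else if x ≤ 1 then (u + x) / 2
  else 1 - (1 - u) ^ 2 / (2 * (x - u))

/-- For u ∈ [0,1) and v ∈ (0,1), the resource ratio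
x = u + (1-u)²/(2(1-v)) if u ≤ 2v-1, x = 2v-u if 2v-1 ≤ u ≤ v, and x = v if u ≥ v,
attains game value exactly v: V(x,u) = v. -/
theorem stmt_17 (u v : ℝ) (hu0 : 0 ≤ u) (hu1 : u < 1) (hv0 : 0 < v) (hv1 : v < 1)
    (x : ℝ)
    (hx : x = if u ≤ 2 * v - 1 then u + (1 - u) ^ 2 / (2 * (1 - v))
          else if u ≤ v then 2 * v - u
          else v) :
    glsValue u x = v := by
  have hden : (0:ℝ) < 2 * (1 - v) := by linarith
  have hu1' : (0:ℝ) < 1 - u := by linarith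
  by_cases h1 : u ≤ 2 * v - 1
  · rw [if_pos h1] at hx
    have hdpos : 0 < (1 - u) ^ 2 / (2 * (1 - v)) := by positivity
    have hkey : 1 - u ≤ (1 - u) ^ 2 / (2 * (1 - v)) := by
      rw [le_div_iff₀ hden]; nlinarith
    have hxu : ¬ x ≤ u := by linarith
    unfold glsValue
    rw [if_neg hxu]
    by_cases h2 : x ≤ 1
    · rw [if_pos h2]
      have heq : (1 - u) ^ 2 / (2 * (1 - v)) = 1 - u := by linarith
      rw [div_eq_iff (ne_of_gt hden)] at heq
      nlinarith
    · rw [if_neg h2]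
      have hxu' : x - u = (1 - u) ^ 2 / (2 * (1 - v)) := by linarith
      rw [hxu']
      have h1u : (1 - u) ≠ 0 := ne_of_gt hu1'
      have h1v : (1 - v) ≠ 0 := by intro h; nlinarith
      field_simp
      ring
  · rw [if_neg h1] at hx
    by_cases h2 : u ≤ v
    · rw [if_pos h2] at hx
      rcases eq_or_lt_of_le h2 with h3 | h3
      · unfold glsValue
        rw [if_pos (by linarith)]
        linarith
      · unfold glsValue
        rw [if_neg (by push_neg; linarith), if_pos (by push_neg at h1; linarith)]
        linarith
    · rw [if_neg h2] at hx
      unfold glsValue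
      rw [if_pos (by push_neg at h2; linarith)]
      exact hx
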